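/- Let H be any finite simple graph of order n ≥ 1. Then the total domination polynomial of the graph H(3) satisfies D_t(H(3),x) = x^{2n}(x+2)^n. -/

import Mathlib

open Polynomial

/-- `D` is a total dominating set of `G`: every vertex has a neighbor in `D`. -/
def SimpleGraph.IsTDS {V : Type*} (G : SimpleGraph V) (D : Finset V) : Prop :=
  ∀ v, ∃ u ∈ D, G.Adj v u

/-- `d_t(G,i)`: the number of total dominating sets of `G` of cardinality `i`. -/
noncomputable def SimpleGraph.dt {V : Type*} [Fintype V] (G : SimpleGraph V) (i : ℕ) : ℕ :=
  Set.ncard {D : Finset V | D.card = i ∧ G.IsTDS D}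

/-- The total domination polynomial `D_t(G,x) = Σ_{i=1}^{n} d_t(G,i) xⁱ` (over `ℂ`). -/
noncomputable def SimpleGraph.DtPoly {V : Type*} [Fintype V] (G : SimpleGraph V) :
    Polynomial ℂ :=
  ∑ i ∈ Finset.Icc 1 (Fintype.card V), Polynomial.C (G.dt i : ℂ) * Polynomial.X ^ i

/-- `w` is a support vertex of `G`: it is adjacent to a leaf (a vertex of degree one). -/
def SimpleGraph.IsSupportVertex {V : Type*} (G : SimpleGraph V) (w : V) : Prop :=
  ∃ l, G.Adj w l ∧ G.neighborSet l = {w}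

/-- The total domination number: minimum cardinality of a total dominating set. -/
noncomputable def SimpleGraph.gammaT {V : Type*} [Fintype V] (G : SimpleGraph V) : ℕ :=
  sInf {i | ∃ D : Finset V, D.card = i ∧ G.IsTDS D}

/-- The graph `H(3)`: to each vertex `u` of `H` (realized as `(u,0)`) a path on the two
new vertices `(u,1)`, `(u,2)` is attached, via the edges `(u,0)(u,1)` and
`(u,1)(u,2)`. -/
def attachP3 {W : Type*} (H : SimpleGraph W) : SimpleGraph (W × Fin 3) :=
  SimpleGraph.fromRel (fun a b =>
    ((a.2 : ℕ) = 0 ∧ (b.2 : ℕ) = 0 ∧ H.Adj a.1 b.1) ∨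
    (a.1 = b.1 ∧ (((a.2 : ℕ) = 0 ∧ (b.2 : ℕ) = 1) ∨ ((a.2 : ℕ) = 1 ∧ (b.2 : ℕ) = 2))))

/-! In `H(3)` the leaf `(u, 2)` has the single neighbour `(u, 1)`, and `(u, 1)` has the
neighbours `(u, 0)` and `(u, 2)`; once every `(u, 1)` is chosen, all the vertices `(u, 0)` are
dominated, whatever `H` is. So a set is totally dominating exactly when each column
`{(u, 0), (u, 1), (u, 2)}` meets it in one of `{0, 1}`, `{1, 2}`, `{0, 1, 2}`, independently of
the other columns. Each column contributes `x² + x² + x³ = x²(x + 2)`, and the columns multiply. -/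

open Finset

namespace SimpleGraph

variable {V : Type*}

lemma IsTDS.nonempty [Nonempty V] {G : SimpleGraph V} {D : Finset V} (hD : G.IsTDS D) :
    D.Nonempty :=
  let ⟨u, hu, _⟩ := hD (Classical.arbitrary V)
  ⟨u, hu⟩

variable [Fintype V] (G : SimpleGraph V) [DecidablePred G.IsTDS]

lemma dt_eq_card_filter (i : ℕ) : G.dt i = #{D : Finset V | G.IsTDS D ∧ #D = i} := by
  rw [dt, ← Set.ncard_coe_finset]
  congr 1
  ext D
  simp [and_comm]

lemma DtPoly_eq_sum_isTDS [Nonempty V] :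
    G.DtPoly = ∑ D : Finset V with G.IsTDS D, (X : ℂ[X]) ^ #D := by
  have hcard : ∀ D ∈ ({D | G.IsTDS D} : Finset (Finset V)), #D ∈ Icc 1 (Fintype.card V) :=
    fun D hD ↦ mem_Icc.2 ⟨(mem_filter.1 hD).2.nonempty.card_pos, card_le_univ D⟩
  rw [← sum_fiberwise_of_maps_to hcard, DtPoly]
  refine sum_congr rfl fun i _ ↦ ?_
  rw [dt_eq_card_filter, filter_filter, sum_congr rfl fun D hD ↦ by rw [(mem_filter.1 hD).2.2],
    sum_const, nsmul_eq_mul, C_eq_natCast]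

end SimpleGraph

section Fibers

variable {W ι : Type*} [Fintype W] [DecidableEq W] [Fintype ι] [DecidableEq ι]

lemma card_eq_sum_card_fiber (D : Finset (W × ι)) : #D = ∑ u, #{j | (u, j) ∈ D} := by
  simp only [card_filter, ← Fintype.sum_prod_type', Prod.mk.eta]
  rw [← card_filter, filter_univ_mem]

lemma sum_pow_card_of_forall_fiber_mem {R : Type*} [CommSemiring R] (S : Finset (Finset ι))
    (x : R) :
    ∑ D : Finset (W × ι) with ∀ u, ({j | (u, j) ∈ D} : Finset ι) ∈ S, x ^ #D =
      (∑ s ∈ S, x ^ #s) ^ Fintype.card W := by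
  rw [← card_univ, ← prod_const, prod_univ_sum]
  refine sum_nbij' (fun D u ↦ {j | (u, j) ∈ D}) (fun g ↦ ({p | p.2 ∈ g p.1} : Finset (W × ι)))
    (fun D hD ↦ by simpa using hD) (fun g hg ↦ by simpa using hg) (fun D _ ↦ by ext; simp)
    (fun g _ ↦ by ext; simp) fun D _ ↦ ?_
  rw [card_eq_sum_card_fiber D, prod_pow_eq_pow_sum]

end Fibers

section AttachP3

variable {W : Type*} (H : SimpleGraph W)

lemma attachP3_adj_two_iff (u : W) (x : W × Fin 3) :
    (attachP3 H).Adj (u, 2) x ↔ x = (u, 1) := by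
  obtain ⟨v, j⟩ := x
  fin_cases j <;> simp [attachP3, eq_comm]

lemma attachP3_adj_one_iff (u : W) (x : W × Fin 3) :
    (attachP3 H).Adj (u, 1) x ↔ x = (u, 0) ∨ x = (u, 2) := by
  obtain ⟨v, j⟩ := x
  fin_cases j <;> simp [attachP3, eq_comm]

lemma attachP3_adj_zero_one (u : W) : (attachP3 H).Adj (u, 0) (u, 1) := by
  simp [attachP3]

lemma attachP3_isTDS_iff (D : Finset (W × Fin 3)) :
    (attachP3 H).IsTDS D ↔ ∀ u, (u, 1) ∈ D ∧ ((u, 0) ∈ D ∨ (u, 2) ∈ D) := by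
  constructor
  · intro hD u
    obtain ⟨x, hx, hx_adj⟩ := hD (u, 2)
    obtain ⟨y, hy, hy_adj⟩ := hD (u, 1)
    rw [attachP3_adj_two_iff] at hx_adj
    rw [attachP3_adj_one_iff] at hy_adj
    subst hx_adj
    rcases hy_adj with rfl | rfl
    · exact ⟨hx, .inl hy⟩
    · exact ⟨hx, .inr hy⟩
  · rintro hD ⟨u, j⟩
    fin_cases j
    · exact ⟨(u, 1), (hD u).1, attachP3_adj_zero_one H u⟩
    · obtain h | h := (hD u).2
      · exact ⟨_, h, (attachP3_adj_one_iff H u _).2 (.inl rfl)⟩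
      · exact ⟨_, h, (attachP3_adj_one_iff H u _).2 (.inr rfl)⟩
    · exact ⟨(u, 1), (hD u).1, (attachP3_adj_two_iff H u _).2 rfl⟩

end AttachP3

lemma sum_pow_card_P3_column {R : Type*} [CommSemiring R] (x : R) :
    ∑ s : Finset (Fin 3) with 1 ∈ s ∧ (0 ∈ s ∨ 2 ∈ s), x ^ #s = x ^ 2 * (x + 2) := by
  rw [show ({s | 1 ∈ s ∧ (0 ∈ s ∨ 2 ∈ s)} : Finset (Finset (Fin 3))) =
      {{0, 1}, {1, 2}, {0, 1, 2}} by decide,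
    sum_insert (by decide), sum_insert (by decide), sum_singleton,
    show #({0, 1} : Finset (Fin 3)) = 2 by rfl, show #({1, 2} : Finset (Fin 3)) = 2 by rfl,
    show #({0, 1, 2} : Finset (Fin 3)) = 3 by rfl]
  ring

/-- For any graph `H` of order `n ≥ 1`, `D_t(H(3), x) = x^{2n}(x+2)^n`. -/
theorem stmt_16 {W : Type*} [Fintype W] (H : SimpleGraph W)
    (hn : 1 ≤ Fintype.card W) :
    (attachP3 H).DtPoly =
      X ^ (2 * Fintype.card W) * (X + 2) ^ (Fintype.card W) := by
  classical
  have : Nonempty W := Fintype.card_pos_iff.mp hn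
  have hcolumns (D : Finset (W × Fin 3)) : (attachP3 H).IsTDS D ↔
      ∀ u, ({j | (u, j) ∈ D} : Finset (Fin 3)) ∈
        ({s | 1 ∈ s ∧ (0 ∈ s ∨ 2 ∈ s)} : Finset (Finset (Fin 3))) := by
    simp [attachP3_isTDS_iff]
  rw [SimpleGraph.DtPoly_eq_sum_isTDS, filter_congr fun D _ ↦ hcolumns D,
    sum_pow_card_of_forall_fiber_mem, sum_pow_card_P3_column, mul_pow, pow_mul]
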